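/- Let p: E → B be a weak homology fibration of simplicial sets and f: B' → B a (Kan) fibration. Then the pullback p': E' → B' of p along f is a weak homology fibration. -/

import Mathlib

open CategoryTheory Simplicial CategoryTheory.Limits

noncomputable section

/-! ### Integral homology of simplicial sets and topological spaces -/

/-- The simplicial (alternating face map) chain complex of a simplicial set,
with coefficients in `ℤ`. -/
def SSet.zChains : SSet.{0} ⥤ ChainComplex (ModuleCat ℤ) ℕ :=
  ((SimplicialObject.whiskering _ _).obj (ModuleCat.free ℤ)) ⋙
    AlgebraicTopology.alternatingFaceMapComplex (ModuleCat ℤ)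

/-- The `n`-th integral homology of a simplicial set. -/
def SSet.integralHomologyFunctor (n : ℕ) : SSet.{0} ⥤ ModuleCat ℤ :=
  SSet.zChains ⋙ HomologicalComplex.homologyFunctor _ _ n

/-- The `n`-th integral singular homology of a topological space, defined as the simplicial
homology of its singular simplicial set. -/
def TopCat.singularHomologyFunctor (n : ℕ) : TopCat.{0} ⥤ ModuleCat ℤ :=
  TopCat.toSSet ⋙ SSet.integralHomologyFunctor n

/-- A continuous map between topological spaces is an integral homology equivalence if it
induces isomorphisms on integral singular homology in all degrees. -/
def TopCat.IsHomologyEquiv {X Y : TopCat.{0}} (f : X ⟶ Y) : Prop :=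
  ∀ n : ℕ, IsIso ((TopCat.singularHomologyFunctor n).map f)

/-- A continuous map is an integral homology equivalence if it induces isomorphisms on
integral singular homology in all degrees. -/
def ContinuousMap.IsHomologyEquiv {X Y : Type} [TopologicalSpace X] [TopologicalSpace Y]
    (f : C(X, Y)) : Prop :=
  TopCat.IsHomologyEquiv (TopCat.ofHom f)

/-- A map of simplicial sets is an integral homology equivalence if its geometric
realization induces isomorphisms on all integral (singular) homology groups
(equivalently, if it induces an isomorphism on simplicial integral homology). -/
def SSet.IsHomologyEquiv {X Y : SSet.{0}} (f : X ⟶ Y) : Prop :=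
  TopCat.IsHomologyEquiv (SSet.toTop.map f)

/-! ### Homotopy fibres -/

/-- The homotopy fibre of a map `f : X → Y` over a point `b : Y`:
pairs of a point `x : X` and a path from `f x` to `b`. -/
def HFiber {X Y : Type} [TopologicalSpace X] [TopologicalSpace Y] (f : X → Y) (b : Y) : Type :=
  { z : X × C(unitInterval, Y) // z.2 0 = f z.1 ∧ z.2 1 = b }

noncomputable instance HFiber.instTopologicalSpace {X Y : Type} [TopologicalSpace X]
    [TopologicalSpace Y] (f : X → Y) (b : Y) : TopologicalSpace (HFiber f b) :=
  inferInstanceAs (TopologicalSpace { z : X × C(unitInterval, Y) // _ })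

/-- The natural map from the strict fibre of a continuous map to its homotopy fibre,
sending a point of the fibre to that point together with the constant path. -/
def fiberToHFiber {X Y : Type} [TopologicalSpace X] [TopologicalSpace Y] (f : C(X, Y)) (b : Y) :
    C({ x : X // f x = b }, HFiber f b) :=
  ⟨fun x => ⟨(x.1, ContinuousMap.const _ b), by simp [x.2], rfl⟩,
    Continuous.subtype_mk (continuous_subtype_val.prodMk continuous_const) _⟩

/-- A continuous map `f : X → Y` is a homology fibration if for every point `b : Y`
the natural map from the strict fibre over `b` to the homotopy fibre over (the component of)
`b` is an integral homology equivalence. -/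
def ContinuousMap.IsHomologyFibration {X Y : Type} [TopologicalSpace X] [TopologicalSpace Y]
    (f : C(X, Y)) : Prop :=
  ∀ b : Y, (fiberToHFiber f b).IsHomologyEquiv

/-! ### Standard simplices, their realizations, and vertices -/

/-- In the lowest universe, the standard simplices agree with the Yoneda embedding. -/
def stdToYoneda : (SSet.stdSimplex.{0} : SimplexCategory ⥤ SSet.{0}) ≅ yoneda :=
  NatIso.ofComponents
    (fun _ => NatIso.ofComponents (fun _ => Equiv.ulift.toIso) (fun _ => rfl)) (fun _ => rfl)

/-- The geometric realization of the standard `n`-simplex is isomorphic (in `TopCat`)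
to the topological `n`-simplex. -/
def realStdSimplexIso (n : ℕ) :
    SSet.toTop.obj Δ[n] ≅ SimplexCategory.toTop.obj ⦋n⦌ :=
  SSet.toTopSimplex.app ⦋n⦌

/-- The topological `n`-simplex as in the older library: functions to `ℝ≥0` summing to `1`. -/
def SimplexCategory.toTopObj (x : SimplexCategory) : Set (Fin (x.len + 1) → NNReal) :=
  { f | ∑ i, f i = 1 }

/-- Auxiliary: the real standard simplex is homeomorphic to `SimplexCategory.toTopObj`. -/
def stdSimplexHomeoToTopObj (n : ℕ) :
    stdSimplex ℝ (Fin (n + 1)) ≃ₜ SimplexCategory.toTopObj ⦋n⦌ where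
  toFun x := ⟨fun i => ⟨x.1 i, x.2.1 i⟩, by
    show ∑ i, _ = (1 : NNReal)
    apply NNReal.coe_injective
    exact (NNReal.coe_sum _ _).trans x.2.2⟩
  invFun f := ⟨fun i => (f.1 i : ℝ), fun i => (f.1 i).2, by
    have h := congrArg (fun r : NNReal => (r : ℝ)) (show ∑ i, f.1 i = 1 from f.2)
    push_cast at h
    exact h⟩
  left_inv x := rfl
  right_inv f := rfl
  continuous_toFun := Continuous.subtype_mk (continuous_pi fun i =>
    Continuous.subtype_mk ((continuous_apply i).comp continuous_subtype_val) _) _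
  continuous_invFun := Continuous.subtype_mk (continuous_pi fun i =>
    NNReal.continuous_coe.comp ((continuous_apply i).comp continuous_subtype_val)) _

/-- The geometric realization of the standard `n`-simplex is homeomorphic
to the topological `n`-simplex. -/
def realStdSimplexHomeo (n : ℕ) :
    (SSet.toTop.obj Δ[n] : Type) ≃ₜ SimplexCategory.toTopObj ⦋n⦌ :=
  (TopCat.homeoOfIso (realStdSimplexIso n)).trans
    (Homeomorph.ulift.trans (stdSimplexHomeoToTopObj n))

/-- Auxiliary: view a point of the topological `n`-simplex as a function `Fin (n+1) → ℝ≥0`. -/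
def toTopObjFun {n : ℕ} (z : SimplexCategory.toTopObj ⦋n⦌) : Fin (n + 1) → NNReal := z.1

lemma toTopObjFun_sum {n : ℕ} (z : SimplexCategory.toTopObj ⦋n⦌) :
    ∑ i, toTopObjFun z i = 1 := z.2

/-- Auxiliary: build a point of the topological `n`-simplex from a function `Fin (n+1) → ℝ≥0`. -/
def toTopObjMk {n : ℕ} (f : Fin (n + 1) → NNReal) (hf : ∑ i, f i = 1) :
    SimplexCategory.toTopObj ⦋n⦌ := ⟨f, hf⟩

/-- The `0`-th vertex of the topological `n`-simplex. -/
def vtx0 (n : ℕ) : SimplexCategory.toTopObj ⦋n⦌ :=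
  toTopObjMk (fun i => if i = 0 then 1 else 0) (by simp)

/-- The straight-line contraction of the topological `n`-simplex onto its `0`-th vertex. -/
def toTopObjContraction (n : ℕ) :
    C(SimplexCategory.toTopObj ⦋n⦌ × unitInterval, SimplexCategory.toTopObj ⦋n⦌) := by
  refine ⟨fun z => toTopObjMk (fun i => ⟨(1 - (z.2 : ℝ)) * (toTopObjFun z.1 i : ℝ) +
      (z.2 : ℝ) * (toTopObjFun (vtx0 n) i : ℝ), ?_⟩) ?_, ?_⟩
  · have h1 : (0:ℝ) ≤ 1 - (z.2 : ℝ) := by have := z.2.2.2; linarith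
    have h2 : (0:ℝ) ≤ (z.2 : ℝ) := z.2.2.1
    positivity
  · apply NNReal.coe_injective
    refine (NNReal.coe_sum _ _).trans ?_
    show ∑ i, ((1 - (z.2 : ℝ)) * (toTopObjFun z.1 i : ℝ) +
      (z.2 : ℝ) * (toTopObjFun (vtx0 n) i : ℝ)) = ((1 : NNReal) : ℝ)
    rw [NNReal.coe_one, Finset.sum_add_distrib, ← Finset.mul_sum, ← Finset.mul_sum]
    have hz1 : ((∑ i, toTopObjFun z.1 i : NNReal) : ℝ) = 1 := by
      rw [toTopObjFun_sum]; norm_num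
    have hv : ((∑ i, toTopObjFun (vtx0 n) i : NNReal) : ℝ) = 1 := by
      rw [toTopObjFun_sum]; norm_num
    push_cast at hz1 hv
    rw [hz1, hv]; ring
  · apply Continuous.subtype_mk
    apply continuous_pi
    intro i
    apply Continuous.subtype_mk
    have c1 : Continuous fun z : SimplexCategory.toTopObj ⦋n⦌ × unitInterval =>
        (toTopObjFun z.1 i : ℝ) :=
      NNReal.continuous_coe.comp ((continuous_apply i).comp
        (continuous_subtype_val.comp continuous_fst))
    have c2 : Continuous fun z : SimplexCategory.toTopObj ⦋n⦌ × unitInterval => (z.2 : ℝ) :=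
      continuous_subtype_val.comp continuous_snd
    exact ((continuous_const.sub c2).mul c1).add (c2.mul continuous_const)

lemma toTopObjContraction_zero (n : ℕ) (x : SimplexCategory.toTopObj ⦋n⦌) :
    toTopObjContraction n (x, 0) = x := by
  apply Subtype.ext
  funext i
  apply NNReal.coe_injective
  show (1 - ((0 : unitInterval) : ℝ)) * _ + ((0 : unitInterval) : ℝ) * _ = _
  norm_num
  rfl

lemma toTopObjContraction_one (n : ℕ) (x : SimplexCategory.toTopObj ⦋n⦌) :
    toTopObjContraction n (x, 1) = vtx0 n := by
  apply Subtype.ext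
  funext i
  apply NNReal.coe_injective
  show (1 - ((1 : unitInterval) : ℝ)) * _ + ((1 : unitInterval) : ℝ) * _ = _
  norm_num
  rfl

/-- The canonical point of `|Δ[n]|` corresponding to the `0`-th vertex. -/
def stdVertexPt (n : ℕ) : (SSet.toTop.obj Δ[n] : Type) :=
  (realStdSimplexHomeo n).symm (vtx0 n)

/-- The contraction of `|Δ[n]|` onto its `0`-th vertex. -/
def stdContraction (n : ℕ) :
    C((SSet.toTop.obj Δ[n] : Type) × unitInterval, (SSet.toTop.obj Δ[n] : Type)) :=
  ⟨fun z => (realStdSimplexHomeo n).symm (toTopObjContraction n (realStdSimplexHomeo n z.1, z.2)),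
    by continuity⟩

lemma stdContraction_zero (n : ℕ) (x : (SSet.toTop.obj Δ[n] : Type)) :
    stdContraction n (x, 0) = x := by
  show (realStdSimplexHomeo n).symm (toTopObjContraction n (realStdSimplexHomeo n x, 0)) = x
  rw [toTopObjContraction_zero]
  exact (realStdSimplexHomeo n).symm_apply_apply x

lemma stdContraction_one (n : ℕ) (x : (SSet.toTop.obj Δ[n] : Type)) :
    stdContraction n (x, 1) = stdVertexPt n := by
  show (realStdSimplexHomeo n).symm (toTopObjContraction n (realStdSimplexHomeo n x, 1)) =
    stdVertexPt n
  rw [toTopObjContraction_one]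
  rfl

/-- The point of `|B|` determined by a vertex `v : Δ[0] ⟶ B` of a simplicial set `B`. -/
def vertexPt {B : SSet.{0}} (v : Δ[0] ⟶ B) : (SSet.toTop.obj B : Type) :=
  SSet.toTop.map v (stdVertexPt 0)

/-! ### Preimages of simplices and (weak) homology fibrations of simplicial sets -/

/-- `dp p σ` is the "preimage" of the simplex `σ : Δ[n] ⟶ B` under `p : E ⟶ B`, i.e.
the pullback of `Δ[n] → B ← E`. -/
def SSet.dp {E B : SSet.{0}} (p : E ⟶ B) {n : ℕ} (σ : Δ[n] ⟶ B) : SSet.{0} :=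
  pullback σ p

/-- The homotopy fibre of (the realization of) `p : E ⟶ B` over the `0`-th vertex of the
simplex `σ : Δ[n] ⟶ B`. -/
def SSet.Fib {E B : SSet.{0}} (p : E ⟶ B) {n : ℕ} (σ : Δ[n] ⟶ B) : Type :=
  HFiber (SSet.toTop.map p) (SSet.toTop.map σ (stdVertexPt n))

noncomputable instance SSet.Fib.instTopologicalSpace {E B : SSet.{0}} (p : E ⟶ B) {n : ℕ}
    (σ : Δ[n] ⟶ B) : TopologicalSpace (SSet.Fib p σ) :=
  inferInstanceAs (TopologicalSpace (HFiber _ _))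

/-- Auxiliary for `SSet.dpToFib`: the family of paths in `|B|`, obtained by applying `σ` to
the straight-line paths in `|Δ[n]|` joining a point to the `0`-th vertex. -/
def SSet.dpPath {E B : SSet.{0}} (p : E ⟶ B) {n : ℕ} (σ : Δ[n] ⟶ B) :
    C((SSet.toTop.obj (SSet.dp p σ) : Type), C(unitInterval, (SSet.toTop.obj B : Type))) :=
  ContinuousMap.curry
    ⟨fun z => SSet.toTop.map σ
      (stdContraction n (SSet.toTop.map (pullback.fst σ p) z.1, z.2)),
      (SSet.toTop.map σ).hom.continuous.comp ((stdContraction n).continuous.comp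
        (((SSet.toTop.map (pullback.fst σ p)).hom.continuous.comp continuous_fst).prodMk
          continuous_snd))⟩

/-- The natural map `dp(σ) → Fib_σ(p)` from the preimage of a simplex `σ : Δ[n] ⟶ B` under
`p : E ⟶ B` to the homotopy fibre of `p` over (the component of) `σ`: a point `d` of the
preimage is sent to its image in `E`, together with the path obtained by applying `σ` to the
straight-line path in `Δ[n]` joining the image of `d` to the `0`-th vertex. -/
def SSet.dpToFib {E B : SSet.{0}} (p : E ⟶ B) {n : ℕ} (σ : Δ[n] ⟶ B) :
    C((SSet.toTop.obj (SSet.dp p σ) : Type), SSet.Fib p σ) := by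
  refine ⟨fun d => ⟨(SSet.toTop.map (pullback.snd σ p) d, SSet.dpPath p σ d), ?_, ?_⟩, ?_⟩
  · show SSet.toTop.map σ (stdContraction n (SSet.toTop.map (pullback.fst σ p) d, 0)) = _
    rw [stdContraction_zero]
    have h : SSet.toTop.map (pullback.fst σ p) ≫ SSet.toTop.map σ =
        SSet.toTop.map (pullback.snd σ p) ≫ SSet.toTop.map p := by
      rw [← SSet.toTop.map_comp, ← SSet.toTop.map_comp, pullback.condition]
    exact congrFun (congrArg (fun (f : _ ⟶ _) => (f : _ → _)) h) d
  · show SSet.toTop.map σ (stdContraction n (SSet.toTop.map (pullback.fst σ p) d, 1)) = _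
    rw [stdContraction_one]
  · exact Continuous.subtype_mk
      ((SSet.toTop.map (pullback.snd σ p)).hom.continuous.prodMk (SSet.dpPath p σ).continuous) _

/-- A map of simplicial sets `p : E ⟶ B` is a homology fibration if for every simplex
`σ : Δ[n] ⟶ B` the natural map `dp(σ) → Fib_σ(p)` is an integral homology equivalence. -/
def SSet.IsHomologyFibration {E B : SSet.{0}} (p : E ⟶ B) : Prop :=
  ∀ (n : ℕ) (σ : Δ[n] ⟶ B), (SSet.dpToFib p σ).IsHomologyEquiv

/-- The map `dp(θσ) → dp(σ)` induced by a simplicial operation `θ`. -/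
def SSet.dpMap {E B : SSet.{0}} (p : E ⟶ B) {n m : ℕ}
    (θ : (⦋m⦌ : SimplexCategory) ⟶ ⦋n⦌) (σ : Δ[n] ⟶ B) :
    SSet.dp p (SSet.stdSimplex.map θ ≫ σ) ⟶ SSet.dp p σ :=
  pullback.map (SSet.stdSimplex.map θ ≫ σ) p σ p
    (SSet.stdSimplex.map θ) (𝟙 E) (𝟙 B) (by simp) (by simp)

/-- A map of simplicial sets `p : E ⟶ B` is a weak homology fibration if for every simplex
`σ : Δ[n] ⟶ B` and every simplicial operation `θ` the natural map `dp(θσ) → dp(σ)` is an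
integral homology equivalence. -/
def SSet.IsWeakHomologyFibration {E B : SSet.{0}} (p : E ⟶ B) : Prop :=
  ∀ (n m : ℕ) (θ : (⦋m⦌ : SimplexCategory) ⟶ ⦋n⦌) (σ : Δ[n] ⟶ B),
    SSet.IsHomologyEquiv (SSet.dpMap p θ σ)

/-- The homotopy fibre of (the realization of) `p : E ⟶ B` over a vertex `v : Δ[0] ⟶ B`. -/
def SSet.vFib {E B : SSet.{0}} (p : E ⟶ B) (v : Δ[0] ⟶ B) : Type :=
  HFiber (SSet.toTop.map p) (vertexPt v)

noncomputable instance SSet.vFib.instTopologicalSpace {E B : SSet.{0}} (p : E ⟶ B)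
    (v : Δ[0] ⟶ B) : TopologicalSpace (SSet.vFib p v) :=
  inferInstanceAs (TopologicalSpace (HFiber _ _))

/-- The map induced on homotopy fibres (over a vertex `v` of `B₀`) by a commutative square
with vertical maps `p₀ : E₀ ⟶ B₀`, `p₁ : E₁ ⟶ B₁` and horizontal maps
`eMap : E₀ ⟶ E₁`, `bMap : B₀ ⟶ B₁`. -/
def SSet.hFiberMap {E₀ B₀ E₁ B₁ : SSet.{0}} (p₀ : E₀ ⟶ B₀) (p₁ : E₁ ⟶ B₁)
    (eMap : E₀ ⟶ E₁) (bMap : B₀ ⟶ B₁) (w : p₀ ≫ bMap = eMap ≫ p₁) (v : Δ[0] ⟶ B₀) :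
    C(SSet.vFib p₀ v, SSet.vFib p₁ (v ≫ bMap)) := by
  refine ⟨fun z => ⟨(SSet.toTop.map eMap z.1.1,
    (show SSet.toTop.obj B₀ ⟶ SSet.toTop.obj B₁ from SSet.toTop.map bMap).hom.comp z.1.2),
    ?_, ?_⟩, ?_⟩
  · show SSet.toTop.map bMap (z.1.2 0) = _
    rw [z.2.1]
    have h : SSet.toTop.map p₀ ≫ SSet.toTop.map bMap =
        SSet.toTop.map eMap ≫ SSet.toTop.map p₁ := by
      rw [← SSet.toTop.map_comp, ← SSet.toTop.map_comp, w]
    exact congrFun (congrArg (fun (f : _ ⟶ _) => (f : _ → _)) h) z.1.1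
  · show SSet.toTop.map bMap (z.1.2 1) = _
    rw [z.2.2]
    show SSet.toTop.map bMap (SSet.toTop.map v (stdVertexPt 0)) = _
    have h : SSet.toTop.map v ≫ SSet.toTop.map bMap = SSet.toTop.map (v ≫ bMap) := by
      rw [SSet.toTop.map_comp]
    exact congrFun (congrArg (fun (f : _ ⟶ _) => (f : _ → _)) h) (stdVertexPt 0)
  · apply Continuous.subtype_mk
    exact ((SSet.toTop.map eMap).hom.continuous.comp
        (continuous_fst.comp continuous_subtype_val)).prodMk
      ((ContinuousMap.continuous_postcomp _).comp
        (continuous_snd.comp continuous_subtype_val))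

/-- A cofibration of simplicial sets is a levelwise injective map. -/
def SSet.IsCofibration {X Y : SSet.{0}} (f : X ⟶ Y) : Prop :=
  ∀ k : SimplexCategoryᵒᵖ, Function.Injective (f.app k)

/-- A map of simplicial sets is a Kan fibration if it has the right lifting property
with respect to all horn inclusions. -/
def SSet.IsKanFibration {X Y : SSet.{0}} (f : X ⟶ Y) : Prop :=
  ∀ (n : ℕ) (i : Fin (n + 1)), HasLiftingProperty (SSet.horn n i).ι f

/-! By pasting of pullback squares, the preimage of a simplex `σ` of `B'` under the pulled-back
map is the preimage of `σ ≫ f` under `p`, and this identification is compatible with the maps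
induced by simplicial operators. Hence every map `dp(θσ) → dp(σ)` for the pulled-back map is,
up to isomorphism of arrows, the map `dp(θ(σ ≫ f)) → dp(σ ≫ f)` for `p`. -/

lemma SSet.IsHomologyEquiv.of_arrow_iso {X Y X' Y' : SSet.{0}} {g : X ⟶ Y} {h : X' ⟶ Y'}
    (e : Arrow.mk g ≅ Arrow.mk h) (hh : SSet.IsHomologyEquiv h) : SSet.IsHomologyEquiv g :=
  fun n => (MorphismProperty.isomorphisms _).arrow_mk_iso_iff
    ((SSet.toTop ⋙ TopCat.singularHomologyFunctor n).mapArrow.mapIso e) |>.2 (hh n)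

lemma pullbackRightPullbackFstIso_hom_comp_map {C : Type*} [Category C] [HasPullbacks C]
    {X Y B B' E : C} (p : E ⟶ B) (f : B' ⟶ B) (a : X ⟶ Y) (σ : Y ⟶ B') :
    (pullbackRightPullbackFstIso f p (a ≫ σ)).hom ≫
        pullback.map ((a ≫ σ) ≫ f) p (σ ≫ f) p a (𝟙 _) (𝟙 _) (by simp) (by simp) =
      pullback.map (a ≫ σ) (pullback.fst f p) σ (pullback.fst f p) a (𝟙 _) (𝟙 _)
        (by simp) (by simp) ≫ (pullbackRightPullbackFstIso f p σ).hom := by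
  apply pullback.hom_ext <;>
    simp only [pullback.map, Category.assoc, Category.comp_id, pullback.lift_fst, pullback.lift_snd,
      pullback.lift_snd_assoc, pullbackRightPullbackFstIso_hom_fst,
      pullbackRightPullbackFstIso_hom_fst_assoc, pullbackRightPullbackFstIso_hom_snd]

theorem weak_homology_fibration_pullback_general {E B B' : SSet.{0}} (p : E ⟶ B) (f : B' ⟶ B)
    (hp : SSet.IsWeakHomologyFibration p) :
    SSet.IsWeakHomologyFibration (pullback.fst f p : pullback f p ⟶ B') := by
  intro n m θ σ
  exact (hp n m θ (σ ≫ f)).of_arrow_iso <| Arrow.isoMk _ _ <|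
    pullbackRightPullbackFstIso_hom_comp_map p f (SSet.stdSimplex.map θ) σ

/-- **Pullbacks of weak homology fibrations along Kan fibrations.**
Let `p : E ⟶ B` be a weak homology fibration of simplicial sets and `f : B' ⟶ B` a Kan
fibration. Then the pullback `p' : E' ⟶ B'` of `p` along `f` is a weak homology fibration. -/
theorem weak_homology_fibration_pullback {E B B' : SSet.{0}} (p : E ⟶ B) (f : B' ⟶ B)
    (hf : SSet.IsKanFibration f) (hp : SSet.IsWeakHomologyFibration p) :
    SSet.IsWeakHomologyFibration (pullback.fst f p : pullback f p ⟶ B') :=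
  weak_homology_fibration_pullback_general p f hp

end
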